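/- Under the assumptions of the previous statement, the Douglas–Rachford flow ż = −z + R_{μg}(R_{μf}(z)) has a globally exponentially stable equilibrium z⋆: ‖z(t) − z⋆‖ ≤ e^{−(1−σ)t}‖z(0) − z⋆‖ for all t ≥ 0, where σ = max(|1−μm|,|1−μL|). -/

import Mathlib

open InnerProductSpace Set Filter Topology

/-!
The Douglas–Rachford map `T = R_g ∘ R_f`, with `R = 2P - I`, is a `σ`-contraction. The proximal
map of a convex function is firmly nonexpansive, so `R_g` is nonexpansive. For `f` strongly convex
and smooth, `R_f = (I - μ∇f) ∘ (I + μ∇f)⁻¹`; the resolvent is nonexpansive and the gradient step is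
`σ`-Lipschitz by the interpolation inequality
`‖∇f x - ∇f y‖² + m L ‖x - y‖² ≤ (m + L) ⟪∇f x - ∇f y, x - y⟫`.
Along the flow, `eᵗ (z t - z⋆)` has derivative `eᵗ (T (z t) - T z⋆)`, of norm at most
`σ ‖eᵗ (z t - z⋆)‖`, and Gronwall's inequality gives the rate `e^{-(1-σ)t}`.
-/

section

variable {E : Type*} [NormedAddCommGroup E] [InnerProductSpace ℝ E]

def reflectedResolvent (P : E → E) (x : E) : E := (2 : ℝ) • P x - x

theorem ConvexOn.add_inner_le_of_isMinOn_prox {g : E → ℝ} (hg : ConvexOn ℝ univ g) {μ : ℝ}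
    (hμ : 0 < μ) {u p : E}
    (hp : IsMinOn (fun z => g z + 1 / (2 * μ) * ‖z - u‖ ^ 2) univ p) (q : E) :
    g p + μ⁻¹ * ⟪u - p, q - p⟫_ℝ ≤ g q := by
  have step : ∀ t ∈ Ioc (0 : ℝ) 1,
      g p + μ⁻¹ * ⟪u - p, q - p⟫_ℝ ≤ g q + t * (‖q - p‖ ^ 2 / (2 * μ)) := by
    rintro t ⟨ht0, ht1⟩
    have hmin : g p + 1 / (2 * μ) * ‖p - u‖ ^ 2
        ≤ g ((1 - t) • p + t • q) + 1 / (2 * μ) * ‖(1 - t) • p + t • q - u‖ ^ 2 :=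
      hp (mem_univ _)
    have hconv : g ((1 - t) • p + t • q) ≤ (1 - t) * g p + t * g q :=
      hg.2 (mem_univ p) (mem_univ q) (by linarith) ht0.le (by ring)
    have hexpand : ‖(1 - t) • p + t • q - u‖ ^ 2
        = ‖p - u‖ ^ 2 - 2 * t * ⟪u - p, q - p⟫_ℝ + t ^ 2 * ‖q - p‖ ^ 2 := by
      rw [show (1 - t) • p + t • q - u = t • (q - p) - (u - p) by module, norm_sub_sq_real,
        inner_smul_left, norm_smul, real_inner_comm, Real.norm_of_nonneg ht0.le, ← norm_neg (u - p),
        neg_sub]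
      simp only [conj_trivial]
      ring
    rw [hexpand] at hmin
    have key : t * (g p + μ⁻¹ * ⟪u - p, q - p⟫_ℝ)
        ≤ t * (g q + t * (‖q - p‖ ^ 2 / (2 * μ))) := by
      field_simp at hmin ⊢
      nlinarith
    exact le_of_mul_le_mul_left key ht0
  have hlim : Tendsto (fun t : ℝ => g q + t * (‖q - p‖ ^ 2 / (2 * μ))) (𝓝[>] 0) (𝓝 (g q)) := by
    simpa using (tendsto_const_nhds.add (tendsto_id.mul_const _)).mono_left
      (nhdsWithin_le_nhds (a := (0 : ℝ)))
  exact ge_of_tendsto hlim (Filter.mem_of_superset (Ioc_mem_nhdsGT one_pos) step)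

theorem ConvexOn.norm_sq_le_inner_of_isMinOn_prox {g : E → ℝ} (hg : ConvexOn ℝ univ g) {μ : ℝ}
    (hμ : 0 < μ) {P : E → E}
    (hP : ∀ v, IsMinOn (fun z => g z + 1 / (2 * μ) * ‖z - v‖ ^ 2) univ (P v)) (u v : E) :
    ‖P u - P v‖ ^ 2 ≤ ⟪P u - P v, u - v⟫_ℝ := by
  have hu := hg.add_inner_le_of_isMinOn_prox hμ (hP u) (P v)
  have hv := hg.add_inner_le_of_isMinOn_prox hμ (hP v) (P u)
  have hsum : ⟪u - P u, P v - P u⟫_ℝ + ⟪v - P v, P u - P v⟫_ℝ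
      = ‖P u - P v‖ ^ 2 - ⟪P u - P v, u - v⟫_ℝ := by
    rw [show P v - P u = -(P u - P v) by abel, inner_neg_right, neg_add_eq_sub, ← inner_sub_left,
      ← real_inner_self_eq_norm_sq, real_inner_comm, ← inner_sub_right]
    congr 1
    abel
  have : μ⁻¹ * (‖P u - P v‖ ^ 2 - ⟪P u - P v, u - v⟫_ℝ) ≤ 0 := by
    rw [← hsum]; linarith
  nlinarith [inv_pos.2 hμ]

theorem norm_two_smul_sub_le_of_norm_sq_le_inner {a b : E} (h : ‖a‖ ^ 2 ≤ ⟪a, b⟫_ℝ) :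
    ‖(2 : ℝ) • a - b‖ ≤ ‖b‖ := by
  refine pow_le_pow_iff_left₀ (norm_nonneg _) (norm_nonneg _) two_ne_zero |>.1 ?_
  rw [norm_sub_sq_real, inner_smul_left, norm_smul]
  simp only [conj_trivial, Real.norm_ofNat]
  nlinarith

theorem ConvexOn.norm_reflectedResolvent_sub_le {g : E → ℝ} (hg : ConvexOn ℝ univ g) {μ : ℝ}
    (hμ : 0 < μ) {P : E → E}
    (hP : ∀ v, IsMinOn (fun z => g z + 1 / (2 * μ) * ‖z - v‖ ^ 2) univ (P v)) (u v : E) :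
    ‖reflectedResolvent P u - reflectedResolvent P v‖ ≤ ‖u - v‖ := by
  have h := norm_two_smul_sub_le_of_norm_sq_le_inner (hg.norm_sq_le_inner_of_isMinOn_prox hμ hP u v)
  rwa [smul_sub, sub_sub_sub_comm] at h

theorem norm_sub_le_of_add_smul_eq {P G : E → E} {μ : ℝ} (hμ : 0 ≤ μ)
    (hP : ∀ v, P v + μ • G (P v) = v) (hG : ∀ a b, 0 ≤ ⟪G a - G b, a - b⟫_ℝ) (x y : E) :
    ‖P x - P y‖ ≤ ‖x - y‖ := by
  refine pow_le_pow_iff_left₀ (norm_nonneg _) (norm_nonneg _) two_ne_zero |>.1 ?_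
  have hxy : x - y = (P x - P y) + μ • (G (P x) - G (P y)) := by
    conv_lhs => rw [← hP x, ← hP y]
    module
  rw [hxy, norm_add_sq_real, inner_smul_right, real_inner_comm]
  nlinarith [hG (P x) (P y), sq_nonneg ‖μ • (G (P x) - G (P y))‖]

theorem reflectedResolvent_eq_sub_smul {P G : E → E} {μ : ℝ} (hP : ∀ v, P v + μ • G (P v) = v)
    (x : E) : reflectedResolvent P x = P x - μ • G (P x) := by
  rw [reflectedResolvent]
  linear_combination (norm := module) hP x

theorem add_inner_add_norm_sq_le_of_quadratic_bounds {p : E → ℝ} {G : E → E} {K : ℝ} (hK : 0 < K)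
    (hlow : ∀ a b, p a + ⟪G a, b - a⟫_ℝ ≤ p b)
    (hup : ∀ a b, p b ≤ p a + ⟪G a, b - a⟫_ℝ + K / 2 * ‖b - a‖ ^ 2) (a b : E) :
    p a + ⟪G a, b - a⟫_ℝ + (2 * K)⁻¹ * ‖G b - G a‖ ^ 2 ≤ p b := by
  set d := G b - G a
  set w := b - K⁻¹ • d
  have h1 := hlow a w
  have h2 := hup b w
  rw [show w - a = (b - a) - K⁻¹ • d by simp only [w]; abel, inner_sub_right,
    real_inner_smul_right] at h1
  rw [show w - b = -(K⁻¹ • d) by simp only [w]; abel, inner_neg_right, real_inner_smul_right,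
    norm_neg, norm_smul, Real.norm_of_nonneg (inv_nonneg.2 hK.le)] at h2
  have hd : ⟪G b, d⟫_ℝ - ⟪G a, d⟫_ℝ = ‖d‖ ^ 2 := by
    rw [← inner_sub_left, real_inner_self_eq_norm_sq]
  have hK' : K / 2 * (K⁻¹ * ‖d‖) ^ 2 = (2 * K)⁻¹ * ‖d‖ ^ 2 := by
    field_simp
  have hK'' : K⁻¹ * ⟪G b, d⟫_ℝ - K⁻¹ * ⟪G a, d⟫_ℝ = 2 * (2 * K)⁻¹ * ‖d‖ ^ 2 := by
    rw [← mul_sub, hd]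
    field_simp
  linarith

theorem inv_mul_norm_sq_le_inner_of_quadratic_bounds {p : E → ℝ} {G : E → E} {K : ℝ}
    (hK : 0 < K) (hlow : ∀ a b, p a + ⟪G a, b - a⟫_ℝ ≤ p b)
    (hup : ∀ a b, p b ≤ p a + ⟪G a, b - a⟫_ℝ + K / 2 * ‖b - a‖ ^ 2) (a b : E) :
    K⁻¹ * ‖G a - G b‖ ^ 2 ≤ ⟪G a - G b, a - b⟫_ℝ := by
  have hab := add_inner_add_norm_sq_le_of_quadratic_bounds hK hlow hup a b
  have hba := add_inner_add_norm_sq_le_of_quadratic_bounds hK hlow hup b a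
  have hinner : ⟪G a, b - a⟫_ℝ + ⟪G b, a - b⟫_ℝ = -⟪G a - G b, a - b⟫_ℝ := by
    rw [← neg_sub a b, inner_neg_right, inner_sub_left]
    ring
  rw [norm_sub_rev] at hab
  have hK2 : (2 * K)⁻¹ + (2 * K)⁻¹ = K⁻¹ := by field_simp; ring
  nlinarith

end

theorem sq_sub_mul_add_le_max_sq_mul {m L μ D N s : ℝ} (hm : 0 < m) (hmL : m ≤ L) (hμ : 0 < μ)
    (hD : 0 ≤ D) (hinterp : N + m * L * D ≤ (m + L) * s) (hN_lo : m ^ 2 * D ≤ N)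
    (hN_hi : N ≤ L ^ 2 * D) :
    D - 2 * μ * s + μ ^ 2 * N ≤ max |1 - μ * m| |1 - μ * L| ^ 2 * D := by
  have hmL' : 0 < m + L := by linarith
  -- `(m + L)` times the gap to `(1 - μ m)² D` is `μ (2 - μ (m + L)) (N - m² D)` plus `2 μ` times
  -- the interpolation slack; symmetrically for `L`.
  rcases le_total (μ * (m + L)) 2 with hsmall | hlarge
  · have h : D - 2 * μ * s + μ ^ 2 * N ≤ (1 - μ * m) ^ 2 * D := by
      refine le_of_mul_le_mul_left ?_ hmL'
      nlinarith [mul_nonneg (sub_nonneg.2 hsmall) (sub_nonneg.2 hN_lo)]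
    calc _ ≤ (1 - μ * m) ^ 2 * D := h
      _ ≤ _ := by
        rw [← sq_abs]
        gcongr
        exact le_max_left _ _
  · have h : D - 2 * μ * s + μ ^ 2 * N ≤ (1 - μ * L) ^ 2 * D := by
      refine le_of_mul_le_mul_left ?_ hmL'
      nlinarith [mul_nonneg (sub_nonneg.2 hlarge) (sub_nonneg.2 hN_hi)]
    calc _ ≤ (1 - μ * L) ^ 2 * D := h
      _ ≤ _ := by
        rw [← sq_abs]
        gcongr
        exact le_max_right _ _

section

variable {E : Type*} [NormedAddCommGroup E] [InnerProductSpace ℝ E] [CompleteSpace E]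
  {f : E → ℝ} {m L μ : ℝ}

theorem le_add_inner_gradient_add_of_lipschitz_gradient (hf : Differentiable ℝ f)
    (hlip : ∀ x y, ‖gradient f x - gradient f y‖ ≤ L * ‖x - y‖) (x y : E) :
    f y ≤ f x + ⟪gradient f x, y - x⟫_ℝ + L / 2 * ‖y - x‖ ^ 2 := by
  set γ : ℝ → E := fun t => x + t • (y - x)
  have hγ : ∀ t, HasDerivAt γ (y - x) t := fun t =>
    (((hasDerivAt_id t).smul_const (y - x)).const_add x).congr_deriv (one_smul ℝ _)
  have hfγ : ∀ t, HasDerivAt (f ∘ γ) ⟪gradient f (γ t), y - x⟫_ℝ t := fun t =>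
    (hf (γ t)).hasGradientAt.hasFDerivAt.comp_hasDerivAt t (hγ t)
  set B : ℝ → ℝ := fun t => f x + t * ⟪gradient f x, y - x⟫_ℝ + L / 2 * ‖y - x‖ ^ 2 * t ^ 2
  have hB : ∀ t, HasDerivAt B (⟪gradient f x, y - x⟫_ℝ + L * ‖y - x‖ ^ 2 * t) t := fun t =>
    ((((hasDerivAt_id t).mul_const _).const_add (f x)).add
      ((hasDerivAt_pow 2 t).const_mul (L / 2 * ‖y - x‖ ^ 2))).congr_deriv (by norm_num; ring)
  have hslope : ∀ t ∈ Ico (0 : ℝ) 1,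
      ⟪gradient f (γ t), y - x⟫_ℝ ≤ ⟪gradient f x, y - x⟫_ℝ + L * ‖y - x‖ ^ 2 * t := by
    rintro t ⟨ht0, -⟩
    have hγx : γ t - x = t • (y - x) := by simp only [γ]; abel
    calc ⟪gradient f (γ t), y - x⟫_ℝ
        = ⟪gradient f x, y - x⟫_ℝ + ⟪gradient f (γ t) - gradient f x, y - x⟫_ℝ := by
          rw [inner_sub_left]; ring
      _ ≤ ⟪gradient f x, y - x⟫_ℝ + ‖gradient f (γ t) - gradient f x‖ * ‖y - x‖ := by
          gcongr; exact real_inner_le_norm _ _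
      _ ≤ ⟪gradient f x, y - x⟫_ℝ + L * ‖γ t - x‖ * ‖y - x‖ := by
          gcongr; exact hlip _ _
      _ = ⟪gradient f x, y - x⟫_ℝ + L * ‖y - x‖ ^ 2 * t := by
          rw [hγx, norm_smul, Real.norm_of_nonneg ht0]; ring
  have h := image_le_of_deriv_right_le_deriv_boundary
    (fun t _ => (hfγ t).continuousAt.continuousWithinAt) (fun t _ => (hfγ t).hasDerivWithinAt)
    (by simp [γ, B]) (fun t _ => (hB t).continuousAt.continuousWithinAt)
    (fun t _ => (hB t).hasDerivWithinAt) hslope (right_mem_Icc.2 zero_le_one)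
  simpa [γ, B] using h

theorem mul_norm_sq_le_inner_gradient_sub
    (hsc : ∀ x y : E, f y ≥ f x + ⟪gradient f x, y - x⟫_ℝ + m / 2 * ‖y - x‖ ^ 2) (x y : E) :
    m * ‖x - y‖ ^ 2 ≤ ⟪gradient f x - gradient f y, x - y⟫_ℝ := by
  have hxy := hsc x y
  have hyx := hsc y x
  rw [← neg_sub x y, inner_neg_right, norm_neg] at hxy
  rw [inner_sub_left]
  linarith

theorem norm_sq_add_mul_le_inner_gradient_sub (hm : 0 ≤ m) (hmL : m ≤ L)
    (hf : Differentiable ℝ f)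
    (hsc : ∀ x y : E, f y ≥ f x + ⟪gradient f x, y - x⟫_ℝ + m / 2 * ‖y - x‖ ^ 2)
    (hlip : ∀ x y, ‖gradient f x - gradient f y‖ ≤ L * ‖x - y‖) (x y : E) :
    ‖gradient f x - gradient f y‖ ^ 2 + m * L * ‖x - y‖ ^ 2
      ≤ (m + L) * ⟪gradient f x - gradient f y, x - y⟫_ℝ := by
  have hmono := mul_norm_sq_le_inner_gradient_sub hsc x y
  rcases hmL.eq_or_lt with rfl | hlt
  · nlinarith [hlip x y, norm_nonneg (gradient f x - gradient f y)]
  -- `f - m/2 ‖·‖²` is convex with `(L - m)`-Lipschitz gradient, hence its gradient is cocoercive.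
  set G : E → E := fun z => gradient f z - m • z
  have hsq : ∀ a b : E, ‖b‖ ^ 2 - ‖a‖ ^ 2 - 2 * ⟪a, b - a⟫_ℝ = ‖b - a‖ ^ 2 := fun a b => by
    rw [norm_sub_sq_real, inner_sub_right, real_inner_self_eq_norm_sq, real_inner_comm]
    ring
  have hG : ∀ a b : E, ⟪G a, b - a⟫_ℝ = ⟪gradient f a, b - a⟫_ℝ - m * ⟪a, b - a⟫_ℝ := fun a b => by
    simp only [G, inner_sub_left, real_inner_smul_left]
  have hcoco := inv_mul_norm_sq_le_inner_of_quadratic_bounds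
    (p := fun z => f z - m / 2 * ‖z‖ ^ 2) (G := G) (sub_pos.2 hlt)
    (fun a b => by have := hsc a b; have := hsq a b; simp only [hG]; nlinarith)
    (fun a b => by
      have := le_add_inner_gradient_add_of_lipschitz_gradient hf hlip a b
      have := hsq a b
      simp only [hG]
      nlinarith) x y
  have hGxy : G x - G y = (gradient f x - gradient f y) - m • (x - y) := by
    simp only [G]; module
  set d := x - y
  set g := gradient f x - gradient f y
  rw [hGxy, norm_sub_sq_real, real_inner_smul_right, norm_smul, Real.norm_of_nonneg hm,
    inner_sub_left g, real_inner_smul_left, real_inner_self_eq_norm_sq] at hcoco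
  have hLm : 0 < L - m := sub_pos.2 hlt
  rw [inv_mul_le_iff₀ hLm] at hcoco
  nlinarith

theorem norm_sub_smul_gradient_sub_le (hm : 0 < m) (hmL : m ≤ L) (hμ : 0 < μ)
    (hf : Differentiable ℝ f)
    (hsc : ∀ x y : E, f y ≥ f x + ⟪gradient f x, y - x⟫_ℝ + m / 2 * ‖y - x‖ ^ 2)
    (hlip : ∀ x y, ‖gradient f x - gradient f y‖ ≤ L * ‖x - y‖) (x y : E) :
    ‖(x - μ • gradient f x) - (y - μ • gradient f y)‖
      ≤ max |1 - μ * m| |1 - μ * L| * ‖x - y‖ := by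
  set d := x - y
  set g := gradient f x - gradient f y
  refine pow_le_pow_iff_left₀ (norm_nonneg _) (by positivity) two_ne_zero |>.1 ?_
  have hmono : m * ‖d‖ ^ 2 ≤ ⟪g, d⟫_ℝ := mul_norm_sq_le_inner_gradient_sub hsc x y
  have hN_lo : m ^ 2 * ‖d‖ ^ 2 ≤ ‖g‖ ^ 2 := by
    have hcs : ⟪g, d⟫_ℝ ≤ ‖g‖ * ‖d‖ := real_inner_le_norm _ _
    nlinarith [sq_nonneg (‖g‖ - m * ‖d‖), norm_nonneg d]
  have hN_hi : ‖g‖ ^ 2 ≤ L ^ 2 * ‖d‖ ^ 2 := by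
    nlinarith [hlip x y, norm_nonneg g]
  rw [show x - μ • gradient f x - (y - μ • gradient f y) = d - μ • g by simp only [d, g]; module,
    norm_sub_sq_real, real_inner_smul_right, real_inner_comm, norm_smul, Real.norm_of_nonneg hμ.le,
    mul_pow, mul_pow]
  linarith [sq_sub_mul_add_le_max_sq_mul hm hmL hμ (sq_nonneg ‖d‖)
    (norm_sq_add_mul_le_inner_gradient_sub hm.le hmL hf hsc hlip x y) hN_lo hN_hi]

theorem norm_reflectedResolvent_sub_le_of_strongly_convex (hm : 0 < m) (hmL : m ≤ L)
    (hμ : 0 < μ) (hf : Differentiable ℝ f)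
    (hsc : ∀ x y : E, f y ≥ f x + ⟪gradient f x, y - x⟫_ℝ + m / 2 * ‖y - x‖ ^ 2)
    (hlip : ∀ x y, ‖gradient f x - gradient f y‖ ≤ L * ‖x - y‖) {P : E → E}
    (hP : ∀ v, P v + μ • gradient f (P v) = v) (x y : E) :
    ‖reflectedResolvent P x - reflectedResolvent P y‖
      ≤ max |1 - μ * m| |1 - μ * L| * ‖x - y‖ := by
  have hmono : ∀ a b, 0 ≤ ⟪gradient f a - gradient f b, a - b⟫_ℝ := fun a b =>
    le_trans (by positivity) (mul_norm_sq_le_inner_gradient_sub hsc a b)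
  rw [reflectedResolvent_eq_sub_smul hP, reflectedResolvent_eq_sub_smul hP]
  calc ‖P x - μ • gradient f (P x) - (P y - μ • gradient f (P y))‖
      ≤ max |1 - μ * m| |1 - μ * L| * ‖P x - P y‖ :=
        norm_sub_smul_gradient_sub_le hm hmL hμ hf hsc hlip _ _
    _ ≤ max |1 - μ * m| |1 - μ * L| * ‖x - y‖ := by
        gcongr
        exact norm_sub_le_of_add_smul_eq hμ.le hP hmono x y

end

theorem norm_sub_le_exp_of_hasDerivAt_eq_neg_add {E : Type*} [NormedAddCommGroup E]
    [NormedSpace ℝ E] {T : E → E} {σ : ℝ} {zstar : E}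
    (hT : ∀ x, ‖T x - zstar‖ ≤ σ * ‖x - zstar‖) {z : ℝ → E}
    (hz : ∀ t, 0 ≤ t → HasDerivAt z (-z t + T (z t)) t) {t : ℝ} (ht : 0 ≤ t) :
    ‖z t - zstar‖ ≤ Real.exp (-(1 - σ) * t) * ‖z 0 - zstar‖ := by
  set u : ℝ → E := fun s => Real.exp s • (z s - zstar)
  have hu : ∀ s, 0 ≤ s → HasDerivAt u (Real.exp s • (T (z s) - zstar)) s := fun s hs =>
    ((Real.hasDerivAt_exp s).smul ((hz s hs).sub_const zstar)).congr_deriv (by module)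
  have hbound := norm_le_gronwallBound_of_norm_deriv_right_le (K := σ) (ε := 0) (a := 0) (b := t)
    (fun s hs => (hu s hs.1).continuousAt.continuousWithinAt)
    (fun s hs => (hu s hs.1).hasDerivWithinAt) le_rfl
    (fun s _ => by
      simp only [u, norm_smul, Real.norm_of_nonneg (Real.exp_pos s).le, add_zero]
      nlinarith [hT (z s), Real.exp_pos s]) t (right_mem_Icc.2 ht)
  simp only [u, gronwallBound_ε0, sub_zero, norm_smul, Real.norm_of_nonneg (Real.exp_pos _).le,
    Real.exp_zero, norm_one, one_mul] at hbound
  rw [show -(1 - σ) * t = σ * t - t by ring, Real.exp_sub, div_mul_eq_mul_div, le_div_iff₀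
    (Real.exp_pos t)]
  linarith [mul_comm (Real.exp t) ‖z t - zstar‖, mul_comm (Real.exp (σ * t)) ‖z 0 - zstar‖]

theorem stmt14_general (n : ℕ) (f g : EuclideanSpace ℝ (Fin n) → ℝ) (m L μ : ℝ)
    (hm : 0 < m) (hmL : m ≤ L) (hμ : 0 < μ)
    (hdiff : Differentiable ℝ f)
    (hsc : ∀ x y : EuclideanSpace ℝ (Fin n),
      f y ≥ f x + ⟪gradient f x, y - x⟫_ℝ + m / 2 * ‖y - x‖ ^ 2)
    (hlip : ∀ x y : EuclideanSpace ℝ (Fin n),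
      ‖gradient f x - gradient f y‖ ≤ L * ‖x - y‖)
    (hg : ConvexOn ℝ Set.univ g)
    (Pf Pg : EuclideanSpace ℝ (Fin n) → EuclideanSpace ℝ (Fin n))
    (hPf : ∀ v : EuclideanSpace ℝ (Fin n), Pf v + μ • gradient f (Pf v) = v)
    (hPg : ∀ v : EuclideanSpace ℝ (Fin n),
      IsMinOn (fun z => g z + 1 / (2 * μ) * ‖z - v‖ ^ 2) Set.univ (Pg v))
    (zstar : EuclideanSpace ℝ (Fin n))
    (hzstar : (2 : ℝ) • Pg ((2 : ℝ) • Pf zstar - zstar) -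
      ((2 : ℝ) • Pf zstar - zstar) = zstar)
    (z : ℝ → EuclideanSpace ℝ (Fin n)) (hz : Differentiable ℝ z)
    (hode : ∀ t : ℝ, 0 ≤ t →
      deriv z t = -z t +
        ((2 : ℝ) • Pg ((2 : ℝ) • Pf (z t) - z t) - ((2 : ℝ) • Pf (z t) - z t))) :
    ∀ t : ℝ, 0 ≤ t →
      ‖z t - zstar‖ ≤
        Real.exp (-(1 - max |1 - μ * m| |1 - μ * L|) * t) * ‖z 0 - zstar‖ := by
  set T := fun x => reflectedResolvent Pg (reflectedResolvent Pf x)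
  have hT : ∀ x, ‖T x - zstar‖ ≤ max |1 - μ * m| |1 - μ * L| * ‖x - zstar‖ := fun x =>
    calc ‖T x - zstar‖ = ‖T x - T zstar‖ := by rw [show T zstar = zstar from hzstar]
      _ ≤ ‖reflectedResolvent Pf x - reflectedResolvent Pf zstar‖ :=
        hg.norm_reflectedResolvent_sub_le hμ hPg _ _
      _ ≤ max |1 - μ * m| |1 - μ * L| * ‖x - zstar‖ :=
        norm_reflectedResolvent_sub_le_of_strongly_convex hm hmL hμ hdiff hsc hlip hPf x zstar
  exact fun t ht => norm_sub_le_exp_of_hasDerivAt_eq_neg_add hT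
    (fun s hs => hode s hs ▸ (hz s).hasDerivAt) ht

theorem stmt14 (n : ℕ) (f g : EuclideanSpace ℝ (Fin n) → ℝ) (m L μ : ℝ)
    (hm : 0 < m) (hmL : m ≤ L) (hμ : 0 < μ) (hμL : μ < 2 / L)
    (hdiff : Differentiable ℝ f)
    (hsc : ∀ x y : EuclideanSpace ℝ (Fin n),
      f y ≥ f x + ⟪gradient f x, y - x⟫_ℝ + m / 2 * ‖y - x‖ ^ 2)
    (hlip : ∀ x y : EuclideanSpace ℝ (Fin n),
      ‖gradient f x - gradient f y‖ ≤ L * ‖x - y‖)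
    (hg : ConvexOn ℝ Set.univ g) (hgc : LowerSemicontinuous g)
    (Pf Pg : EuclideanSpace ℝ (Fin n) → EuclideanSpace ℝ (Fin n))
    (hPf : ∀ v : EuclideanSpace ℝ (Fin n), Pf v + μ • gradient f (Pf v) = v)
    (hPg : ∀ v : EuclideanSpace ℝ (Fin n),
      IsMinOn (fun z => g z + 1 / (2 * μ) * ‖z - v‖ ^ 2) Set.univ (Pg v))
    (zstar : EuclideanSpace ℝ (Fin n))
    (hzstar : (2 : ℝ) • Pg ((2 : ℝ) • Pf zstar - zstar) -
      ((2 : ℝ) • Pf zstar - zstar) = zstar)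
    (z : ℝ → EuclideanSpace ℝ (Fin n)) (hz : Differentiable ℝ z)
    (hode : ∀ t : ℝ, 0 ≤ t →
      deriv z t = -z t +
        ((2 : ℝ) • Pg ((2 : ℝ) • Pf (z t) - z t) - ((2 : ℝ) • Pf (z t) - z t))) :
    ∀ t : ℝ, 0 ≤ t →
      ‖z t - zstar‖ ≤
        Real.exp (-(1 - max |1 - μ * m| |1 - μ * L|) * t) * ‖z 0 - zstar‖ :=
  stmt14_general n f g m L μ hm hmL hμ hdiff hsc hlip hg Pf Pg hPf hPg zstar hzstar z hz hode
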